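/- Let P_p = ⟨{φ}, χ, H, E, p⟩ be a PrAP and let τ be an L_CPL-term composed of literals from H. Then τ is a preferred solution to P_p if and only if Ξ_p, ¬△¬Pr(φ∧τ) ⊭_FP ⊥, FP ⊨ Pr(φ∧τ) → Pr(χ), and, in addition, Ξ_p, Pr(σ) → Pr(τ) ⊭_FP ⊥ for every solution σ to P_p. -/

import Mathlib

open scoped Classical

/-- Classical propositional formulas (the language `L_CPL`), built from
propositional variables (indexed by `ℕ`) using ¬, ∧, ∨. -/
inductive CPL where
  | var : ℕ → CPL
  | neg : CPL → CPL
  | and : CPL → CPL → CPL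
  | or : CPL → CPL → CPL
deriving DecidableEq

namespace CPL

/-- The set of propositional variables occurring in a formula. -/
def vars : CPL → Finset ℕ
  | var p => {p}
  | neg φ => vars φ
  | and φ χ => vars φ ∪ vars χ
  | or φ χ => vars φ ∪ vars χ

/-- Classical evaluation of a formula under a Boolean valuation. -/
def eval (v : ℕ → Bool) : CPL → Bool
  | var p => v p
  | neg φ => !eval v φ
  | and φ χ => eval v φ && eval v χ
  | or φ χ => eval v φ || eval v χ

/-- Evaluation of a formula at a state given as a set of variables:
the variables in `X` are true, all others false. -/
def evalSet (X : Finset ℕ) (φ : CPL) : Bool := eval (fun p => decide (p ∈ X)) φ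

/-- CPL-satisfiability. -/
def Satisfiable (φ : CPL) : Prop := ∃ v, eval v φ = true

/-- CPL-validity. -/
def Valid (φ : CPL) : Prop := ∀ v, eval v φ = true

/-- Classical entailment `φ ⊨_CPL χ`. -/
def Entails (φ χ : CPL) : Prop := ∀ v, eval v φ = true → eval v χ = true

/-- A literal: a variable or a negated variable. -/
def IsLiteral (φ : CPL) : Prop := (∃ p, φ = var p) ∨ ∃ p, φ = neg (var p)

/-- An `L_CPL`-term: a conjunction of literals. -/
inductive IsTerm : CPL → Prop
  | lit {φ} : IsLiteral φ → IsTerm φ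
  | conj {φ χ} : IsTerm φ → IsTerm χ → IsTerm (and φ χ)

/-- A conjunction of propositional variables. -/
inductive IsConjVars : CPL → Prop
  | var (p : ℕ) : IsConjVars (var p)
  | conj {φ χ} : IsConjVars φ → IsConjVars χ → IsConjVars (and φ χ)

/-- A disjunction of propositional variables. -/
inductive IsDisjVars : CPL → Prop
  | var (p : ℕ) : IsDisjVars (var p)
  | disj {φ χ} : IsDisjVars φ → IsDisjVars χ → IsDisjVars (or φ χ)

/-- Variables occurring as positive literals (in a term). -/
def posVars : CPL → Finset ℕ
  | var p => {p}
  | neg _ => ∅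
  | and φ χ => posVars φ ∪ posVars χ
  | or _ _ => ∅

/-- Variables occurring as negated literals (in a term). -/
def negVars : CPL → Finset ℕ
  | var _ => ∅
  | neg (var p) => {p}
  | neg _ => ∅
  | and φ χ => negVars φ ∪ negVars χ
  | or _ _ => ∅

/-- The literals occurring in a term. -/
def lits (φ : CPL) : Finset CPL :=
  (posVars φ).image var ∪ (negVars φ).image (fun p => neg (var p))

end CPL

/-- A state (possible world) over a finite set `V` of variables: a subset of `V`. -/
abbrev World (V : Finset ℕ) := {X : Finset ℕ // X ⊆ V}

/-- A probabilistic model for `V`: a finitely additive probability measure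
`μ : 2^(2^V) → [0,1]`. -/
structure ProbModel (V : Finset ℕ) where
  μ : Set (World V) → ℝ
  nonneg : ∀ A, 0 ≤ μ A
  le_one : ∀ A, μ A ≤ 1
  m_univ : μ Set.univ = 1
  m_empty : μ ∅ = 0
  m_add : ∀ A B : Set (World V), Disjoint A B → μ (A ∪ B) = μ A + μ B

/-- The truth set `‖φ‖_M` of a classical formula in a probabilistic model for `V`. -/
def truthSet (V : Finset ℕ) (φ : CPL) : Set (World V) :=
  {w | CPL.evalSet w.1 φ = true}

/-- Comparison symbols ◇ ∈ {≤, <, >, ≥}. -/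
inductive Ineq where
  | le | lt | gt | ge
deriving DecidableEq

/-- The relation denoted by a comparison symbol. -/
def Ineq.holds : Ineq → ℝ → ℝ → Prop
  | le, x, c => x ≤ c
  | lt, x, c => x < c
  | gt, x, c => x > c
  | ge, x, c => x ≥ c

/-- Formulas of the probabilistic language `L^Q_Pr`, built from probabilistic atoms
`Pr(φ)` and `Pr(φ)◇c̄` using ¬, △, ⊙, ⊕, →. -/
inductive FP where
  | prob : CPL → FP
  | probIneq : CPL → Ineq → ℚ → FP
  | neg : FP → FP
  | delta : FP → FP
  | conj : FP → FP → FP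
  | disj : FP → FP → FP
  | impl : FP → FP → FP
deriving DecidableEq

namespace FP

/-- Well-formedness: all rational constants lie in `[0,1] ∩ ℚ`. -/
def WF : FP → Prop
  | prob _ => True
  | probIneq _ _ c => 0 ≤ c ∧ c ≤ 1
  | neg α => WF α
  | delta α => WF α
  | conj α β => WF α ∧ WF β
  | disj α β => WF α ∧ WF β
  | impl α β => WF α ∧ WF β

/-- The variables of an `L^Q_Pr`-formula. -/
def vars : FP → Finset ℕ
  | prob φ => φ.vars
  | probIneq φ _ _ => φ.vars
  | neg α => vars α
  | delta α => vars α
  | conj α β => vars α ∪ vars β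
  | disj α β => vars α ∪ vars β
  | impl α β => vars α ∪ vars β

/-- The events `E(α)`: the classical formulas occurring in probabilistic atoms of `α`. -/
def events : FP → Finset CPL
  | prob φ => {φ}
  | probIneq φ _ _ => {φ}
  | neg α => events α
  | delta α => events α
  | conj α β => events α ∪ events β
  | disj α β => events α ∪ events β
  | impl α β => events α ∪ events β

/-- The FP-interpretation `I_M` induced by a probabilistic model `M`. -/
noncomputable def interp {V : Finset ℕ} (M : ProbModel V) : FP → ℝ
  | prob φ => M.μ (truthSet V φ)
  | probIneq φ d c => if d.holds (M.μ (truthSet V φ)) (c : ℝ) then 1 else 0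
  | neg α => 1 - interp M α
  | delta α => if interp M α = 1 then 1 else 0
  | conj α β => max 0 (interp M α + interp M β - 1)
  | disj α β => min 1 (interp M α + interp M β)
  | impl α β => min 1 (1 - interp M α + interp M β)

/-- `α` is FP-satisfiable: `I_M(α) = 1` in some probabilistic model for `Var(α)`. -/
def Satisfiable (α : FP) : Prop := ∃ M : ProbModel α.vars, interp M α = 1

/-- `α` is FP-valid: `I_M(α) = 1` in every probabilistic model for `Var(α)`. -/
def Valid (α : FP) : Prop := ∀ M : ProbModel α.vars, interp M α = 1

/-- `α ⊨_FP β`: `I_M(β) = 1` in every probabilistic model for the variables of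
`{α, β}` with `I_M(α) = 1`. -/
def Entails1 (α β : FP) : Prop :=
  ∀ M : ProbModel (α.vars ∪ β.vars), interp M α = 1 → interp M β = 1

/-- The variables of a finite set of `L^Q_Pr`-formulas. -/
def varsSet (Γ : Finset FP) : Finset ℕ := Γ.sup vars

/-- A finite set `Γ` is FP-satisfiable (`Γ ⊭_FP ⊥`): some probabilistic model for
the variables of `Γ` makes every member of `Γ` equal to `1`. -/
def SetSatisfiable (Γ : Finset FP) : Prop :=
  ∃ M : ProbModel (varsSet Γ), ∀ γ ∈ Γ, interp M γ = 1

/-- `Γ ⊨_FP δ`: every probabilistic model for the variables of `Γ ∪ {δ}` satisfying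
all of `Γ` satisfies `δ`. -/
def EntailsFin (Γ : Finset FP) (δ : FP) : Prop :=
  ∀ M : ProbModel (varsSet Γ ∪ δ.vars), (∀ γ ∈ Γ, interp M γ = 1) → interp M δ = 1

/-- `Γ ⊨^cons_FP δ`: `Γ ⊨_FP δ` and `Γ ⊭_FP ⊥`. -/
def ConsEntails (Γ : Finset FP) (δ : FP) : Prop :=
  EntailsFin Γ δ ∧ SetSatisfiable Γ

/-- The set of permitted values `V_Pr(Pr(φ)◇c̄)`. -/
def permittedValues (φ : CPL) (d : Ineq) (c : ℚ) : Set ℝ :=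
  {x | ∃ (V : Finset ℕ) (M : ProbModel V), φ.vars ⊆ V ∧
      interp M (probIneq φ d c) = 1 ∧ M.μ (truthSet V φ) = x}

end FP

/-- Formulas of the Łukasiewicz language `L^Q_Ł`, built from propositional variables
and truth-constant literals `p◇c̄` using ¬, △, ⊙, ⊕, →. -/
inductive Luk where
  | var : ℕ → Luk
  | ineq : ℕ → Ineq → ℚ → Luk
  | neg : Luk → Luk
  | delta : Luk → Luk
  | conj : Luk → Luk → Luk
  | disj : Luk → Luk → Luk
  | impl : Luk → Luk → Luk
deriving DecidableEq

/-- An Ł-valuation: a function `Var → [0,1]`. -/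
structure LukVal where
  v : ℕ → ℝ
  mem : ∀ p, v p ∈ Set.Icc (0 : ℝ) 1

/-- Extension of an Ł-valuation to all `L^Q_Ł`-formulas. -/
noncomputable def LukVal.eval (val : LukVal) : Luk → ℝ
  | .var p => val.v p
  | .ineq p d c => if d.holds (val.v p) (c : ℝ) then 1 else 0
  | .neg φ => 1 - val.eval φ
  | .delta φ => if val.eval φ = 1 then 1 else 0
  | .conj φ χ => max 0 (val.eval φ + val.eval χ - 1)
  | .disj φ χ => min 1 (val.eval φ + val.eval χ)
  | .impl φ χ => min 1 (1 - val.eval φ + val.eval χ)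

namespace Luk

/-- Well-formedness: all rational constants lie in `[0,1] ∩ ℚ`. -/
def WF : Luk → Prop
  | var _ => True
  | ineq _ _ c => 0 ≤ c ∧ c ≤ 1
  | neg φ => WF φ
  | delta φ => WF φ
  | conj φ χ => WF φ ∧ WF χ
  | disj φ χ => WF φ ∧ WF χ
  | impl φ χ => WF φ ∧ WF χ

/-- `Φ ⊨_Ł χ` for a finite set `Φ`. -/
def EntailsFin (Φ : Finset Luk) (χ : Luk) : Prop :=
  ∀ val : LukVal, (∀ φ ∈ Φ, val.eval φ = 1) → val.eval χ = 1

/-- `φ` is Ł-valid. -/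
def ValidL (φ : Luk) : Prop := ∀ val : LukVal, val.eval φ = 1

/-- A set of `L^Q_Ł`-formulas is Ł-satisfiable. -/
def SatisfiableSet (S : Set Luk) : Prop := ∃ val : LukVal, ∀ φ ∈ S, val.eval φ = 1

/-- The probabilistic counterpart `φ^Pr` of a Łukasiewicz formula. -/
def toFP : Luk → FP
  | var p => .prob (.var p)
  | ineq p d c => .probIneq (.var p) d c
  | neg φ => .neg (toFP φ)
  | delta φ => .delta (toFP φ)
  | conj φ χ => .conj (toFP φ) (toFP χ)
  | disj φ χ => .disj (toFP φ) (toFP χ)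
  | impl φ χ => .impl (toFP φ) (toFP χ)

end Luk

namespace FP

/-- The outer counterpart `α^↑` of an `L^Q_Pr`-formula, replacing each atom `Pr(φ)`
by the fresh variable `e φ` (and `Pr(φ)◇c̄` by `(e φ)◇c̄`). -/
def outer (e : CPL → ℕ) : FP → Luk
  | prob φ => .var (e φ)
  | probIneq φ d c => .ineq (e φ) d c
  | neg α => .neg (outer e α)
  | delta α => .delta (outer e α)
  | conj α β => .conj (outer e α) (outer e β)
  | disj α β => .disj (outer e α) (outer e β)
  | impl α β => .impl (outer e α) (outer e β)

end FP

/-- The ⊙-conjunction of a (nonempty) list of `L^Q_Pr`-formulas. -/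
def bigConjFP : List FP → FP
  | [] => .probIneq (.var 0) .ge 0
  | a :: t => t.foldl .conj a

/-- The ∨-disjunction of a (nonempty) list of classical formulas. -/
def bigDisjCPL : List CPL → CPL
  | [] => .var 0
  | a :: t => t.foldl .or a

/-- The PIT `⊙_i Pr(τ_i)≤c̄_i ⊙ ⊙_i Pr(τ_i)≥c̄_i` associated with the list of
pairs `(τ_i, c_i)`. -/
def completePITFormula (L : List (CPL × ℚ)) : FP :=
  bigConjFP (L.map (fun t => FP.probIneq t.1 .le t.2) ++
             L.map (fun t => FP.probIneq t.1 .ge t.2))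

/-- `τ` is an `L_CPL`-term containing, for every `p ∈ V`, exactly one of the
literals `p` and `¬p` (and no other variables). -/
def IsCompleteTermOver (V : Finset ℕ) (τ : CPL) : Prop :=
  CPL.IsTerm τ ∧ τ.vars ⊆ V ∧ ∀ p ∈ V, (p ∈ τ.posVars ↔ p ∉ τ.negVars)

/-- Membership in `𝒱 = {0, 1/n, …, (n−1)/n, 1}`. -/
def memVSet (n : ℕ) (c : ℚ) : Prop := ∃ k : ℕ, k ≤ n ∧ c = (k : ℚ) / (n : ℚ)

/-- The data `(τ_i, c_i)` of a `⟨V,𝒱⟩`-complete PIT (with `𝒱` given by `n`). -/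
def IsCompletePIT (V : Finset ℕ) (n : ℕ) (L : List (CPL × ℚ)) : Prop :=
  (L.map Prod.fst).Nodup ∧
  (∀ t ∈ L, IsCompleteTermOver V t.1 ∧ memVSet n t.2) ∧
  (L.map Prod.snd).sum = 1

/-- A measure is coherent with a value assignment `pr` on the events `E`. -/
def coherent {V : Finset ℕ} (M : ProbModel V) (E : Finset CPL) (pr : CPL → ℚ) : Prop :=
  ∀ ψ ∈ E, M.μ (truthSet V ψ) = (pr ψ : ℝ)

/-- Conditional probability `Pr_μ(φ | χ) = μ(‖φ∧χ‖)/μ(‖χ‖)`. -/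
noncomputable def condProb {V : Finset ℕ} (M : ProbModel V) (φ χ : CPL) : ℝ :=
  M.μ (truthSet V (CPL.and φ χ)) / M.μ (truthSet V χ)

/-- `τ` is a solution to the PrAP `⟨{φ}, χ, H, E, pr⟩`: an `L_CPL`-term composed of
literals from `H` s.t. `φ, τ ⊨_CPL χ` and some probabilistic model coherent with `pr`
gives `μ(‖φ∧τ‖) > 0`. -/
def IsPrAPSolution (φ χ : CPL) (H E : Finset CPL) (pr : CPL → ℚ) (τ : CPL) : Prop :=
  CPL.IsTerm τ ∧ τ.lits ⊆ H ∧
  (∀ v, CPL.eval v φ = true → CPL.eval v τ = true → CPL.eval v χ = true) ∧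
  ∃ M : ProbModel (φ.vars ∪ χ.vars),
    coherent M E pr ∧ 0 < M.μ (truthSet (φ.vars ∪ χ.vars) (CPL.and φ τ))

/-- `τ` is a preferred solution: a solution s.t. for every other solution `σ` there is
a probabilistic model coherent with `pr` with `μ(‖τ‖) ≥ μ(‖σ‖)`. -/
def IsPreferredPrAPSolution (φ χ : CPL) (H E : Finset CPL) (pr : CPL → ℚ) (τ : CPL) : Prop :=
  IsPrAPSolution φ χ H E pr τ ∧
  ∀ σ, IsPrAPSolution φ χ H E pr σ → σ ≠ τ →
    ∃ M : ProbModel (φ.vars ∪ χ.vars),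
      coherent M E pr ∧
      M.μ (truthSet (φ.vars ∪ χ.vars) σ) ≤ M.μ (truthSet (φ.vars ∪ χ.vars) τ)

/-- The FP-counterpart `Ξ_p = {Pr(ψ)≈c̄ : ψ ∈ E, p(ψ) = c}` of a value assignment,
where `Pr(ψ)≈c̄` abbreviates `(Pr(ψ)≥c̄) ⊙ (Pr(ψ)≤c̄)`. -/
def XiP (E : Finset CPL) (pr : CPL → ℚ) : Finset FP :=
  E.image (fun ψ => FP.conj (FP.probIneq ψ .ge (pr ψ)) (FP.probIneq ψ .le (pr ψ)))

/-- The next weakest PIL `λ^♭_𝒱` of the PIL `Pr(τ)◇(k/n)`. -/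
def flatPIL (n : ℕ) (τ : CPL) (d : Ineq) (k : ℕ) : FP :=
  match d with
  | .ge => FP.probIneq τ .gt (((k : ℚ) - 1) / (n : ℚ))
  | .gt => FP.probIneq τ .ge ((k : ℚ) / (n : ℚ))
  | .le => FP.probIneq τ .lt (((k : ℚ) + 1) / (n : ℚ))
  | .lt => FP.probIneq τ .le ((k : ℚ) / (n : ℚ))

/-- The theory `Ψ_Γ = Γ^↑ ∪ {p_φ → p_χ : φ, χ ∈ E[Γ], φ ⊨_CPL χ}`. -/
def PsiGamma (Γ : Finset FP) (e : CPL → ℕ) : Set Luk :=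
  (fun α => FP.outer e α) '' (↑Γ : Set FP) ∪
  {ψ | ∃ φ ∈ Γ.sup FP.events, ∃ χ ∈ Γ.sup FP.events,
        CPL.Entails φ χ ∧ ψ = Luk.impl (.var (e φ)) (.var (e χ))}

/-- The conjunction `hd ∧ ⋀_{q ∈ s} q`. -/
def conjVarsFrom (hd : CPL) (s : Finset ℕ) : CPL :=
  (s.sort (· ≤ ·)).foldl (fun acc q => CPL.and acc (CPL.var q)) hd

/-! Each condition on the FP side is a transcription of a clause in the definition of a
preferred solution: `Ξ_p` holds exactly in the models coherent with `p`, `¬△¬Pr(α)` says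
`μ(‖α‖) > 0`, and `Pr(σ) → Pr(τ)` says `μ(‖σ‖) ≤ μ(‖τ‖)`. FP-validity of
`Pr(φ∧τ) → Pr(χ)` is classical entailment, tested on Dirac models. Since an
FP-interpretation only sees the variables of the formula, models can be moved between
variable sets by restricting worlds, so all conditions may be read over the variables of
the problem. -/

namespace CPL

theorem eval_congr {φ : CPL} {v w : ℕ → Bool} (h : ∀ p ∈ φ.vars, v p = w p) :
    eval v φ = eval w φ := by
  induction φ with
  | var p => exact h p (by simp [vars])
  | neg φ ih => simp [eval, ih h]
  | and φ χ ihφ ihχ | or φ χ ihφ ihχ =>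
    simp only [eval]
    rw [ihφ fun p hp => h p (by simp [vars, hp]), ihχ fun p hp => h p (by simp [vars, hp])]

theorem evalSet_inter {φ : CPL} {X V : Finset ℕ} (h : φ.vars ⊆ V) :
    evalSet (X ∩ V) φ = evalSet X φ :=
  eval_congr fun p hp => by simp [h hp]

theorem evalSet_filter {φ : CPL} {V : Finset ℕ} (v : ℕ → Bool) (h : φ.vars ⊆ V) :
    evalSet (V.filter (v · = true)) φ = eval v φ :=
  eval_congr fun p hp => by simp [h hp]

theorem lits_and (φ χ : CPL) : (and φ χ).lits = φ.lits ∪ χ.lits := by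
  ext
  simp only [lits, posVars, negVars, Finset.image_union, Finset.mem_union]
  tauto

theorem IsTerm.vars_subset_sup {τ : CPL} (hτ : IsTerm τ) {H : Finset CPL} (h : τ.lits ⊆ H) :
    τ.vars ⊆ H.sup vars := by
  induction hτ with
  | lit hl =>
    rcases hl with ⟨p, rfl⟩ | ⟨p, rfl⟩ <;>
      exact Finset.le_sup (f := vars) (h (by simp [lits, posVars, negVars]))
  | conj _ _ ih₁ ih₂ =>
    rw [lits_and, Finset.union_subset_iff] at h
    simpa [vars] using Finset.union_subset (ih₁ h.1) (ih₂ h.2)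

end CPL

namespace ProbModel

variable {V : Finset ℕ}

theorem mono (M : ProbModel V) {A B : Set (World V)} (h : A ⊆ B) : M.μ A ≤ M.μ B := by
  have hsplit := M.m_add A (B \ A) Set.disjoint_sdiff_right
  rw [Set.union_sdiff_cancel h] at hsplit
  linarith [M.nonneg (B \ A)]

/-- The image of `M` under the restriction of worlds `w ↦ w ∩ W`. -/
noncomputable def restrict (M : ProbModel V) (W : Finset ℕ) : ProbModel W where
  μ A := M.μ ((fun w : World V => (⟨w.1 ∩ W, Finset.inter_subset_right⟩ : World W)) ⁻¹' A)
  nonneg _ := M.nonneg _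
  le_one _ := M.le_one _
  m_univ := M.m_univ
  m_empty := M.m_empty
  m_add A B h := by
    rw [Set.preimage_union]
    exact M.m_add _ _ (h.preimage _)

theorem restrict_truthSet (M : ProbModel V) {W : Finset ℕ} {φ : CPL} (h : φ.vars ⊆ W) :
    (M.restrict W).μ (truthSet W φ) = M.μ (truthSet V φ) := by
  show M.μ _ = _
  congr 1
  ext w
  simp [truthSet, CPL.evalSet_inter h]

noncomputable def dirac (w : World V) : ProbModel V where
  μ A := if w ∈ A then 1 else 0
  nonneg _ := by split <;> norm_num
  le_one _ := by split <;> norm_num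
  m_univ := by simp
  m_empty := by simp
  m_add A B h := by
    by_cases hA : w ∈ A
    · simp [hA, Set.disjoint_left.mp h hA]
    · simp [hA]

end ProbModel

namespace FP

variable {V : Finset ℕ}

theorem interp_restrict (M : ProbModel V) {W : Finset ℕ} {α : FP} (h : α.vars ⊆ W) :
    interp (M.restrict W) α = interp M α := by
  induction α with
  | prob φ | probIneq φ _ _ => simp only [interp, M.restrict_truthSet (φ := φ) h]
  | neg α ih | delta α ih => simp only [interp, ih h]
  | conj α β ihα ihβ | disj α β ihα ihβ | impl α β ihα ihβ =>
    rw [vars, Finset.union_subset_iff] at h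
    simp only [interp, ihα h.1, ihβ h.2]

theorem setSatisfiable_iff_of_varsSet_subset {Γ : Finset FP} (h : varsSet Γ ⊆ V) :
    SetSatisfiable Γ ↔ ∃ M : ProbModel V, ∀ γ ∈ Γ, interp M γ = 1 := by
  have hΓ : ∀ γ ∈ Γ, γ.vars ⊆ varsSet Γ := fun γ hγ => Finset.le_sup hγ
  constructor
  · rintro ⟨M, hM⟩
    exact ⟨M.restrict V, fun γ hγ => (interp_restrict M ((hΓ γ hγ).trans h)).trans (hM γ hγ)⟩
  · rintro ⟨M, hM⟩
    exact ⟨M.restrict _, fun γ hγ => (interp_restrict M (hΓ γ hγ)).trans (hM γ hγ)⟩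

theorem interp_approxEq_eq_one_iff (M : ProbModel V) (ψ : CPL) (c : ℚ) :
    interp M (conj (probIneq ψ .ge c) (probIneq ψ .le c)) = 1 ↔
      M.μ (truthSet V ψ) = c := by
  simp only [interp, Ineq.holds]
  constructor
  · intro h
    by_contra hne
    rcases lt_or_gt_of_ne hne with hlt | hgt
    · simp [not_le.mpr hlt, hlt.le] at h
    · simp [not_le.mpr hgt, hgt.le] at h
  · intro h
    simp [h]

theorem interp_neg_delta_neg_prob_eq_one_iff (M : ProbModel V) (ψ : CPL) :
    interp M (neg (delta (neg (prob ψ)))) = 1 ↔ 0 < M.μ (truthSet V ψ) := by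
  simp only [interp, sub_eq_self]
  rw [(M.nonneg _).lt_iff_ne']
  split_ifs <;> simp_all

theorem interp_impl_prob_eq_one_iff (M : ProbModel V) (ψ ξ : CPL) :
    interp M (impl (prob ψ) (prob ξ)) = 1 ↔ M.μ (truthSet V ψ) ≤ M.μ (truthSet V ξ) := by
  simp only [interp, min_eq_left_iff]
  constructor <;> intro <;> linarith

theorem valid_impl_prob_iff (ψ ξ : CPL) : Valid (impl (prob ψ) (prob ξ)) ↔ CPL.Entails ψ ξ := by
  have hψ : ψ.vars ⊆ (impl (prob ψ) (prob ξ)).vars := by simp [vars]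
  have hξ : ξ.vars ⊆ (impl (prob ψ) (prob ξ)).vars := by simp [vars]
  simp only [Valid, interp_impl_prob_eq_one_iff]
  generalize (impl (prob ψ) (prob ξ)).vars = W at hψ hξ ⊢
  constructor
  · intro hval v hψv
    by_contra hξv
    let w : World W := ⟨W.filter (v · = true), Finset.filter_subset _ _⟩
    have hmem : ∀ {φ : CPL}, φ.vars ⊆ W → (w ∈ truthSet W φ ↔ CPL.eval v φ = true) :=
      fun hφ => by simp [truthSet, w, CPL.evalSet_filter v hφ]
    have := hval (ProbModel.dirac w)
    norm_num [ProbModel.dirac, (hmem hψ).mpr hψv, mt (hmem hξ).mp hξv] at this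
  · intro hent M
    exact M.mono fun w hw => hent _ hw

end FP

theorem forall_XiP_interp_eq_one_iff {V : Finset ℕ} (M : ProbModel V) (E : Finset CPL)
    (pr : CPL → ℚ) : (∀ γ ∈ XiP E pr, FP.interp M γ = 1) ↔ coherent M E pr := by
  rw [XiP, Finset.forall_mem_image]
  exact forall₂_congr fun ψ _ => FP.interp_approxEq_eq_one_iff M ψ (pr ψ)

theorem varsSet_insert_XiP (α : FP) (E : Finset CPL) (pr : CPL → ℚ) :
    FP.varsSet (insert α (XiP E pr)) = α.vars ∪ E.sup CPL.vars := by
  simp only [FP.varsSet, Finset.sup_insert, XiP, Finset.sup_image]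
  congr 2
  ext ψ
  simp [FP.vars]

theorem setSatisfiable_insert_XiP_iff {V : Finset ℕ} {E : Finset CPL} {pr : CPL → ℚ} {α : FP}
    (hα : α.vars ⊆ V) (hE : E.sup CPL.vars ⊆ V) :
    FP.SetSatisfiable (insert α (XiP E pr)) ↔
      ∃ M : ProbModel V, coherent M E pr ∧ FP.interp M α = 1 := by
  rw [FP.setSatisfiable_iff_of_varsSet_subset
    ((varsSet_insert_XiP α E pr).trans_le (Finset.union_subset hα hE))]
  simp only [Finset.forall_mem_insert, forall_XiP_interp_eq_one_iff, and_comm]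

theorem stmt16_general (φ χ : CPL) (H E : Finset CPL) (pr : CPL → ℚ)
    (hHv : H.sup CPL.vars ⊆ φ.vars ∪ χ.vars)
    (hEv : E.sup CPL.vars ⊆ φ.vars ∪ χ.vars)
    (τ : CPL) (hτ : CPL.IsTerm τ) (hτH : τ.lits ⊆ H) :
    IsPreferredPrAPSolution φ χ H E pr τ ↔
      (FP.SetSatisfiable
          (insert (FP.neg (FP.delta (FP.neg (FP.prob (CPL.and φ τ))))) (XiP E pr)) ∧
        FP.Valid (FP.impl (FP.prob (CPL.and φ τ)) (FP.prob χ)) ∧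
        ∀ σ, IsPrAPSolution φ χ H E pr σ →
          FP.SetSatisfiable
            (insert (FP.impl (FP.prob σ) (FP.prob τ)) (XiP E pr))) := by
  have hτV : τ.vars ⊆ φ.vars ∪ χ.vars := (hτ.vars_subset_sup hτH).trans hHv
  have hpos := setSatisfiable_insert_XiP_iff (pr := pr)
    (α := FP.neg (FP.delta (FP.neg (FP.prob (CPL.and φ τ)))))
    (Finset.union_subset Finset.subset_union_left hτV) hEv
  have hpref : ∀ σ, IsPrAPSolution φ χ H E pr σ →
      (FP.SetSatisfiable (insert (FP.impl (FP.prob σ) (FP.prob τ)) (XiP E pr)) ↔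
        ∃ M : ProbModel (φ.vars ∪ χ.vars), coherent M E pr ∧
          M.μ (truthSet _ σ) ≤ M.μ (truthSet _ τ)) := fun σ ⟨hσ, hσH, _⟩ => by
    rw [setSatisfiable_insert_XiP_iff
      (Finset.union_subset ((hσ.vars_subset_sup hσH).trans hHv) hτV) hEv]
    simp only [FP.interp_impl_prob_eq_one_iff]
  simp only [hpos, FP.interp_neg_delta_neg_prob_eq_one_iff, FP.valid_impl_prob_iff,
    CPL.Entails, CPL.eval, Bool.and_eq_true, and_imp]
  constructor
  · rintro ⟨⟨-, -, hent, M, hM, hμ⟩, hbetter⟩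
    refine ⟨⟨M, hM, hμ⟩, hent, fun σ hσ => (hpref σ hσ).mpr ?_⟩
    obtain rfl | hne := eq_or_ne σ τ
    · exact ⟨M, hM, le_rfl⟩
    · exact hbetter σ hσ hne
  · rintro ⟨⟨M, hM, hμ⟩, hent, hbetter⟩
    exact ⟨⟨hτ, hτH, hent, M, hM, hμ⟩, fun σ hσ _ => (hpref σ hσ).mp (hbetter σ hσ)⟩

/-- For a PrAP `P_p = ⟨{φ}, χ, H, E, pr⟩` and an `L_CPL`-term `τ` composed
of literals from `H`: `τ` is a preferred solution to `P_p` iff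
`Ξ_p, ¬△¬Pr(φ∧τ) ⊭_FP ⊥`, `FP ⊨ Pr(φ∧τ) → Pr(χ)`, and
`Ξ_p, Pr(σ) → Pr(τ) ⊭_FP ⊥` for every solution `σ` to `P_p`. -/
theorem stmt16 (φ χ : CPL) (H E : Finset CPL) (pr : CPL → ℚ)
    (hH : ∀ l ∈ H, CPL.IsLiteral l)
    (hHv : H.sup CPL.vars ⊆ φ.vars ∪ χ.vars)
    (hEv : E.sup CPL.vars ⊆ φ.vars ∪ χ.vars)
    (hpr : ∀ ψ ∈ E, 0 ≤ pr ψ ∧ pr ψ ≤ 1)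
    (τ : CPL) (hτ : CPL.IsTerm τ) (hτH : τ.lits ⊆ H) :
    IsPreferredPrAPSolution φ χ H E pr τ ↔
      (FP.SetSatisfiable
          (insert (FP.neg (FP.delta (FP.neg (FP.prob (CPL.and φ τ))))) (XiP E pr)) ∧
        FP.Valid (FP.impl (FP.prob (CPL.and φ τ)) (FP.prob χ)) ∧
        ∀ σ, IsPrAPSolution φ χ H E pr σ →
          FP.SetSatisfiable
            (insert (FP.impl (FP.prob σ) (FP.prob τ)) (XiP E pr))) :=
  stmt16_general φ χ H E pr hHv hEv τ hτ hτH
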